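/- arXiv:1611.00424 — 3 statements merged into one kernel-verified Lean document; each statement's English description precedes it below -/
import Mathlib

section
/- Let d ≥ 2 be an integer and θ ∈ (0,1) with d·θ > 1. Then there exists h_c > 0 such that the map ψ_h(x) = h + d·arctanh(θ·tanh x) has: exactly one fixed point if |h| > h_c; exactly two fixed points if |h| = h_c; and exactly three fixed points if |h| < h_c. -/
/-!
`x` is a fixed point of `ψ_h` iff `F x = h` for `F x = x - d·artanh(θ·tanh x)`, so we count the
solutions of `F x = h`. `F` is odd, `F x - x` is bounded, and
`F' x = (dθ - θ²)(tanh² x - tanh² a) / (1 - θ² tanh² x)` for the unique `a > 0` with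
`tanh² a = (dθ - 1)/(dθ - θ²)`. Hence `F` increases on `(-∞, -a]`, decreases on `[-a, a]` and
increases on `[a, ∞)`, with `F (-a) = -F a > 0`, and the level `h` is attained once, twice or three
times according as `|h|` is larger than, equal to or smaller than `h_c = F (-a)`.
-/

/-- The inverse hyperbolic tangent, `arctanh x = (1/2)·log((1+x)/(1-x))`. -/
noncomputable def arctanh (x : ℝ) : ℝ := (1 / 2) * Real.log ((1 + x) / (1 - x))

open Filter Set

namespace Real

theorem hasDerivAt_tanh (x : ℝ) : HasDerivAt tanh (1 - tanh x ^ 2) x := by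
  have hcosh := (cosh_pos x).ne'
  have hquot := (hasDerivAt_sinh x).div (hasDerivAt_cosh x) hcosh
  rw [show tanh = fun y => sinh y / cosh y from funext tanh_eq_sinh_div_cosh]
  refine hquot.congr_deriv ?_
  have := cosh_sq_sub_sinh_sq x
  field_simp

theorem tanh_strictMono : StrictMono tanh :=
  strictMono_of_deriv_pos fun x => by
    rw [(hasDerivAt_tanh x).deriv]
    linarith [tanh_sq_lt_one x]

theorem tanh_nonneg {x : ℝ} (hx : 0 ≤ x) : 0 ≤ tanh x :=
  tanh_zero ▸ tanh_strictMono.monotone hx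

theorem abs_tanh (x : ℝ) : |tanh x| = tanh |x| := by
  rcases le_total 0 x with hx | hx
  · rw [abs_of_nonneg hx, abs_of_nonneg (tanh_nonneg hx)]
  · rw [abs_of_nonpos hx, abs_of_nonpos (tanh_zero ▸ tanh_strictMono.monotone hx), tanh_neg]

theorem tanh_sq_lt_tanh_sq_iff {x y : ℝ} : tanh x ^ 2 < tanh y ^ 2 ↔ |x| < |y| := by
  rw [sq_lt_sq, abs_tanh, abs_tanh, tanh_strictMono.lt_iff_lt]

theorem artanh_neg_eq_neg (x : ℝ) : artanh (-x) = -artanh x := by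
  rw [artanh, artanh, show (1 + -x) / (1 - -x) = ((1 + x) / (1 - x))⁻¹ by rw [inv_div]; ring,
    sqrt_inv, log_inv]

theorem abs_artanh_le {x b : ℝ} (hx : |x| ≤ b) (hb : b < 1) : |artanh x| ≤ artanh b := by
  obtain ⟨hbx, hxb⟩ := abs_le.1 hx
  refine abs_le.2 ⟨?_, artanh_le_artanh (by linarith) hb hxb⟩
  rw [← artanh_neg_eq_neg]
  exact artanh_le_artanh (by linarith) (by linarith) hbx

theorem hasDerivAt_artanh {x : ℝ} (hx : x ∈ Ioo (-1) 1) :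
    HasDerivAt artanh (1 - x ^ 2)⁻¹ x := by
  obtain ⟨hx₁, hx₂⟩ := hx
  have hlog : HasDerivAt (fun y => 1 / 2 * (log (1 + y) - log (1 - y))) (1 - x ^ 2)⁻¹ x := by
    have hplus := ((hasDerivAt_id' x).const_add 1).log (by linarith : 0 < 1 + x).ne'
    have hminus := ((hasDerivAt_id' x).const_sub 1).log (by linarith : 0 < 1 - x).ne'
    refine ((hplus.sub hminus).const_mul (1 / 2)).congr_deriv ?_
    have : 1 + x ≠ 0 := by linarith
    have : 1 - x ≠ 0 := by linarith
    rw [show 1 - x ^ 2 = (1 + x) * (1 - x) by ring]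
    field_simp
    ring
  refine hlog.congr_of_eventuallyEq ?_
  filter_upwards [Ioo_mem_nhds hx₁ hx₂] with y hy
  rw [artanh_eq_half_log (Ioo_subset_Icc_self hy),
    log_div (by linarith [hy.1]) (by linarith [hy.2])]

end Real

theorem Set.InjOn.encard_sep_eq {α β : Type*} {f : α → β} {s : Set α} (hf : InjOn f s)
    (y : β) :
    {x ∈ s | f x = y}.encard = (f '' s).indicator 1 y := by
  by_cases hy : y ∈ f '' s
  · rw [indicator_of_mem hy, Pi.one_apply]
    obtain ⟨x, hx, rfl⟩ := hy
    refine encard_eq_one.2 ⟨x, ext fun z => ⟨fun ⟨hz, hfz⟩ => hf hz hx hfz, ?_⟩⟩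
    rintro rfl
    exact ⟨hx, rfl⟩
  · rw [indicator_of_notMem hy]
    refine encard_eq_zero.2 (eq_empty_iff_forall_notMem.2 ?_)
    rintro x ⟨hx, rfl⟩
    exact hy ⟨x, hx, rfl⟩

section UpDownUp

variable {g : ℝ → ℝ} {p q : ℝ}

theorem encard_setOf_eq_of_strictMonoOn_of_strictAntiOn (hg : Continuous g) (hpq : p < q)
    (hL : StrictMonoOn g (Iic p)) (hM : StrictAntiOn g (Icc p q)) (hR : StrictMonoOn g (Ici q))
    (hbot : Tendsto g atBot atBot) (htop : Tendsto g atTop atTop) (y : ℝ) :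
    {x | g x = y}.encard =
      (Iic (g p)).indicator 1 y + (Ioo (g q) (g p)).indicator 1 y + (Ici (g q)).indicator 1 y := by
  have hcover : {x | g x = y} =
      ({x ∈ Iic p | g x = y} ∪ {x ∈ Ioo p q | g x = y}) ∪ {x ∈ Ici q | g x = y} := by
    ext x
    simp only [mem_ofPred_eq, mem_union, mem_Iic, mem_Ioo, mem_Ici]
    constructor
    · intro hx
      rcases le_or_gt x p with hxp | hpx
      · exact Or.inl (Or.inl ⟨hxp, hx⟩)
      rcases lt_or_ge x q with hxq | hqx
      · exact Or.inl (Or.inr ⟨⟨hpx, hxq⟩, hx⟩)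
      · exact Or.inr ⟨hqx, hx⟩
    · rintro ((⟨-, hx⟩ | ⟨-, hx⟩) | ⟨-, hx⟩) <;> exact hx
  have hdisj₁ : Disjoint {x ∈ Iic p | g x = y} {x ∈ Ioo p q | g x = y} :=
    disjoint_left.2 fun x hx hx' => by
      simp only [mem_ofPred_eq, mem_Iic, mem_Ioo] at hx hx'
      linarith
  have hdisj₂ :
      Disjoint ({x ∈ Iic p | g x = y} ∪ {x ∈ Ioo p q | g x = y}) {x ∈ Ici q | g x = y} :=
    disjoint_left.2 fun x hx hx' => by
      simp only [mem_union, mem_ofPred_eq, mem_Iic, mem_Ioo, mem_Ici] at hx hx'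
      rcases hx with hx | hx <;> linarith [hx.1, hx'.1]
  rw [hcover, encard_union_eq hdisj₂, encard_union_eq hdisj₁, hL.injOn.encard_sep_eq,
    (hM.injOn.mono Ioo_subset_Icc_self).encard_sep_eq, hR.injOn.encard_sep_eq,
    hg.continuousOn.image_Iic_of_monotoneOn hL.monotoneOn hbot,
    hg.continuousOn.image_Ioo_of_strictAntiOn hpq.le hM,
    hg.continuousOn.image_Ici_of_monotoneOn hR.monotoneOn htop]

theorem exists_ncard_setOf_eq_trichotomy {a : ℝ} (hg : Continuous g) (hodd : ∀ x, g (-x) = -g x)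
    (ha : 0 < a) (hL : StrictMonoOn g (Iic (-a))) (hM : StrictAntiOn g (Icc (-a) a))
    (hR : StrictMonoOn g (Ici a)) (hbot : Tendsto g atBot atBot) (htop : Tendsto g atTop atTop) :
    ∃ c, 0 < c ∧ ∀ y,
      (c < |y| → {x | g x = y}.ncard = 1) ∧ (|y| = c → {x | g x = y}.ncard = 2) ∧
      (|y| < c → {x | g x = y}.ncard = 3) := by
  have hga : g a = -g (-a) := by rw [hodd, neg_neg]
  have hc : 0 < g (-a) := by
    have := hM (left_mem_Icc.2 (neg_le_self ha.le)) (right_mem_Icc.2 (neg_le_self ha.le))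
      (neg_lt_self ha)
    linarith
  refine ⟨g (-a), hc, fun y => ?_⟩
  simp only [ncard_def,
    encard_setOf_eq_of_strictMonoOn_of_strictAntiOn hg (neg_lt_self ha) hL hM hR hbot htop, hga,
    indicator_apply, mem_Iic, mem_Ioo, mem_Ici, Pi.one_apply, ite_and]
  rcases abs_cases y with ⟨habs, hsign⟩ | ⟨habs, hsign⟩ <;> rw [habs] <;>
    refine ⟨fun hy => ?_, fun hy => ?_, fun hy => ?_⟩ <;> split_ifs <;> first | rfl | linarith

end UpDownUp

open Real

theorem arctanh_eq_artanh {x : ℝ} (hx : x ∈ Icc (-1) 1) : arctanh x = artanh x :=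
  (artanh_eq_half_log hx).symm

theorem abs_mul_tanh_lt_one {θ : ℝ} (hθ : |θ| ≤ 1) (x : ℝ) : |θ * tanh x| < 1 :=
  calc |θ * tanh x| = |θ| * |tanh x| := abs_mul _ _
    _ ≤ |tanh x| := mul_le_of_le_one_left (abs_nonneg _) hθ
    _ < 1 := abs_tanh_lt_one x

/-- `x` is a fixed point of `ψ_h` exactly when `h = fixedPointField d θ x`. -/
noncomputable def fixedPointField (d θ x : ℝ) : ℝ := x - d * artanh (θ * tanh x)

/-- The positive critical point of `fixedPointField d θ` when `0 < θ < 1 < d * θ`. -/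
noncomputable def criticalPoint (d θ : ℝ) : ℝ := artanh √((d * θ - 1) / (d * θ - θ ^ 2))

theorem fixedPoints_eq_setOf_fixedPointField_eq {θ : ℝ} (hθ : |θ| ≤ 1) (d h : ℝ) :
    {x | h + d * arctanh (θ * tanh x) = x} = {x | fixedPointField d θ x = h} := by
  ext x
  rw [mem_ofPred_eq, mem_ofPred_eq, fixedPointField,
    arctanh_eq_artanh (Ioo_subset_Icc_self (abs_lt.1 (abs_mul_tanh_lt_one hθ x)))]
  constructor <;> intro hx <;> linarith

section FixedPointField

variable {d θ : ℝ}

theorem fixedPointField_neg (x : ℝ) : fixedPointField d θ (-x) = -fixedPointField d θ x := by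
  simp only [fixedPointField, tanh_neg, mul_neg, artanh_neg_eq_neg]
  ring

theorem hasDerivAt_fixedPointField (hθ : |θ| ≤ 1) (x : ℝ) :
    HasDerivAt (fixedPointField d θ)
      (1 - d * (θ * (1 - tanh x ^ 2)) / (1 - θ ^ 2 * tanh x ^ 2)) x := by
  have hy := abs_lt.1 (abs_mul_tanh_lt_one hθ x)
  have hinner := (hasDerivAt_artanh hy).comp x ((hasDerivAt_tanh x).const_mul θ)
  refine ((hasDerivAt_id x).sub (hinner.const_mul d)).congr_deriv ?_
  rw [mul_pow, div_eq_mul_inv]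
  ring

theorem continuous_fixedPointField (hθ : |θ| ≤ 1) : Continuous (fixedPointField d θ) :=
  continuous_iff_continuousAt.2 fun x => (hasDerivAt_fixedPointField hθ x).continuousAt

theorem abs_fixedPointField_sub_le (hθ : |θ| < 1) (x : ℝ) :
    |fixedPointField d θ x - x| ≤ |d| * artanh |θ| := by
  rw [fixedPointField, sub_sub_cancel_left, abs_neg, abs_mul]
  refine mul_le_mul_of_nonneg_left (abs_artanh_le ?_ hθ) (abs_nonneg d)
  rw [abs_mul]
  exact mul_le_of_le_one_right (abs_nonneg θ) (abs_tanh_lt_one x).le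

theorem tendsto_fixedPointField_atTop (hθ : |θ| < 1) :
    Tendsto (fixedPointField d θ) atTop atTop :=
  tendsto_atTop_mono (fun x => by linarith [abs_le.1 (abs_fixedPointField_sub_le (d := d) hθ x)])
    (tendsto_atTop_add_const_right _ _ tendsto_id : Tendsto (· + -(|d| * artanh |θ|)) _ _)

theorem tendsto_fixedPointField_atBot (hθ : |θ| < 1) :
    Tendsto (fixedPointField d θ) atBot atBot :=
  tendsto_atBot_mono (fun x => by linarith [abs_le.1 (abs_fixedPointField_sub_le (d := d) hθ x)])
    (tendsto_atBot_add_const_right _ _ tendsto_id : Tendsto (· + |d| * artanh |θ|) _ _)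

theorem one_sub_sq_mul_tanh_sq_pos (hθ : |θ| ≤ 1) (x : ℝ) : 0 < 1 - θ ^ 2 * tanh x ^ 2 := by
  rw [← mul_pow]
  linarith [(sq_lt_one_iff_abs_lt_one _).2 (abs_mul_tanh_lt_one hθ x)]

theorem tanh_criticalPoint_sq (hθ : θ ∈ Ioo 0 1) (hdθ : 1 < d * θ) :
    tanh (criticalPoint d θ) ^ 2 = (d * θ - 1) / (d * θ - θ ^ 2) := by
  obtain ⟨hθ₀, hθ₁⟩ := hθ
  have hpos : 0 < (d * θ - 1) / (d * θ - θ ^ 2) := div_pos (by linarith) (by nlinarith)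
  have hlt : (d * θ - 1) / (d * θ - θ ^ 2) < 1 := (div_lt_one (by nlinarith)).2 (by nlinarith)
  rw [criticalPoint, tanh_artanh ⟨by linarith [sqrt_nonneg ((d * θ - 1) / (d * θ - θ ^ 2))],
    (sqrt_lt' one_pos).2 (by rwa [one_pow])⟩, sq_sqrt hpos.le]

theorem criticalPoint_pos (hθ : θ ∈ Ioo 0 1) (hdθ : 1 < d * θ) : 0 < criticalPoint d θ := by
  obtain ⟨hθ₀, hθ₁⟩ := hθ
  have htanh : tanh 0 ^ 2 < tanh (criticalPoint d θ) ^ 2 := by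
    rw [tanh_criticalPoint_sq ⟨hθ₀, hθ₁⟩ hdθ, tanh_zero, sq, zero_mul]
    exact div_pos (by linarith) (by nlinarith)
  have hne : criticalPoint d θ ≠ 0 := by simpa using tanh_sq_lt_tanh_sq_iff.1 htanh
  exact (artanh_nonneg (sqrt_nonneg _)).lt_of_ne' hne

theorem deriv_fixedPointField (hθ : θ ∈ Ioo 0 1) (hdθ : 1 < d * θ) (x : ℝ) :
    deriv (fixedPointField d θ) x = (d * θ - θ ^ 2) *
      (tanh x ^ 2 - tanh (criticalPoint d θ) ^ 2) / (1 - θ ^ 2 * tanh x ^ 2) := by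
  have hθ' : |θ| ≤ 1 := (abs_of_pos hθ.1).trans_le hθ.2.le
  have hden := (one_sub_sq_mul_tanh_sq_pos hθ' x).ne'
  have hcoef : d * θ - θ ^ 2 ≠ 0 := by nlinarith [hθ.1, hθ.2]
  rw [(hasDerivAt_fixedPointField hθ' x).deriv, tanh_criticalPoint_sq hθ hdθ,
    mul_sub (d * θ - θ ^ 2), mul_div_cancel₀ _ hcoef]
  field_simp
  ring

theorem deriv_fixedPointField_neg (hθ : θ ∈ Ioo 0 1) (hdθ : 1 < d * θ) {x : ℝ}
    (hx : |x| < criticalPoint d θ) : deriv (fixedPointField d θ) x < 0 := by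
  have hsq := tanh_sq_lt_tanh_sq_iff.2 (hx.trans_eq (abs_of_pos (criticalPoint_pos hθ hdθ)).symm)
  rw [deriv_fixedPointField hθ hdθ]
  exact div_neg_of_neg_of_pos (mul_neg_of_pos_of_neg (by nlinarith [hθ.1, hθ.2]) (by linarith))
    (one_sub_sq_mul_tanh_sq_pos ((abs_of_pos hθ.1).trans_le hθ.2.le) x)

theorem deriv_fixedPointField_pos (hθ : θ ∈ Ioo 0 1) (hdθ : 1 < d * θ) {x : ℝ}
    (hx : criticalPoint d θ < |x|) : 0 < deriv (fixedPointField d θ) x := by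
  have hsq := tanh_sq_lt_tanh_sq_iff.2 ((abs_of_pos (criticalPoint_pos hθ hdθ)).trans_lt hx)
  rw [deriv_fixedPointField hθ hdθ]
  exact div_pos (mul_pos (by nlinarith [hθ.1, hθ.2]) (by linarith))
    (one_sub_sq_mul_tanh_sq_pos ((abs_of_pos hθ.1).trans_le hθ.2.le) x)

theorem strictAntiOn_fixedPointField (hθ : θ ∈ Ioo 0 1) (hdθ : 1 < d * θ) :
    StrictAntiOn (fixedPointField d θ) (Icc (-criticalPoint d θ) (criticalPoint d θ)) :=
  strictAntiOn_of_deriv_neg (convex_Icc _ _)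
    (continuous_fixedPointField ((abs_of_pos hθ.1).trans_le hθ.2.le)).continuousOn
    fun x hx => deriv_fixedPointField_neg hθ hdθ (abs_lt.2 (by rwa [interior_Icc] at hx))

theorem strictMonoOn_fixedPointField_Ici (hθ : θ ∈ Ioo 0 1) (hdθ : 1 < d * θ) :
    StrictMonoOn (fixedPointField d θ) (Ici (criticalPoint d θ)) :=
  strictMonoOn_of_deriv_pos (convex_Ici _)
    (continuous_fixedPointField ((abs_of_pos hθ.1).trans_le hθ.2.le)).continuousOn
    fun x hx => deriv_fixedPointField_pos hθ hdθ
      ((by rwa [interior_Ici] at hx : criticalPoint d θ < x).trans_le (le_abs_self x))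

theorem strictMonoOn_fixedPointField_Iic (hθ : θ ∈ Ioo 0 1) (hdθ : 1 < d * θ) :
    StrictMonoOn (fixedPointField d θ) (Iic (-criticalPoint d θ)) :=
  strictMonoOn_of_deriv_pos (convex_Iic _)
    (continuous_fixedPointField ((abs_of_pos hθ.1).trans_le hθ.2.le)).continuousOn
    fun x hx => deriv_fixedPointField_pos hθ hdθ
      ((lt_neg.1 (by rwa [interior_Iic] at hx : x < -criticalPoint d θ)).trans_le (neg_le_abs x))

end FixedPointField


theorem critical_field_trichotomy_general
    (d : ℕ) (θ : ℝ) (hθ : θ ∈ Set.Ioo (0 : ℝ) 1)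
    (hdθ : 1 < (d : ℝ) * θ) :
    ∃ hc : ℝ, 0 < hc ∧ ∀ h : ℝ,
      (hc < |h| →
        {x : ℝ | h + d * arctanh (θ * Real.tanh x) = x}.ncard = 1) ∧
      (|h| = hc →
        {x : ℝ | h + d * arctanh (θ * Real.tanh x) = x}.ncard = 2) ∧
      (|h| < hc →
        {x : ℝ | h + d * arctanh (θ * Real.tanh x) = x}.ncard = 3) := by
  have hθ' : |θ| < 1 := (abs_of_pos hθ.1).trans_lt hθ.2
  obtain ⟨c, hc, hcount⟩ := exists_ncard_setOf_eq_trichotomy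
    (continuous_fixedPointField hθ'.le) fixedPointField_neg (criticalPoint_pos hθ hdθ)
    (strictMonoOn_fixedPointField_Iic hθ hdθ) (strictAntiOn_fixedPointField hθ hdθ)
    (strictMonoOn_fixedPointField_Ici hθ hdθ)
    (tendsto_fixedPointField_atBot hθ') (tendsto_fixedPointField_atTop hθ')
  refine ⟨c, hc, fun h => ?_⟩
  rw [fixedPoints_eq_setOf_fixedPointField_eq hθ'.le]
  exact hcount h

/-- if `d·θ > 1` (low temperature), there is a critical field `h_c > 0`
such that `ψ_h(x) = h + d·arctanh(θ·tanh x)` has exactly one, two, or three fixed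
points according to whether `|h| > h_c`, `|h| = h_c`, or `|h| < h_c`. -/
theorem critical_field_trichotomy
    (d : ℕ) (hd : 2 ≤ d) (θ : ℝ) (hθ : θ ∈ Set.Ioo (0 : ℝ) 1)
    (hdθ : 1 < (d : ℝ) * θ) :
    ∃ hc : ℝ, 0 < hc ∧ ∀ h : ℝ,
      (hc < |h| →
        {x : ℝ | h + d * arctanh (θ * Real.tanh x) = x}.ncard = 1) ∧
      (|h| = hc →
        {x : ℝ | h + d * arctanh (θ * Real.tanh x) = x}.ncard = 2) ∧
      (|h| < hc →
        {x : ℝ | h + d * arctanh (θ * Real.tanh x) = x}.ncard = 3) :=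
  critical_field_trichotomy_general d θ hθ hdθ
end

section
/- Let d ≥ 2 be an integer, θ ∈ (0,1) with d·θ > 1, and h_c > 0 such that ψ(x) = -h_c + d·arctanh(θ·tanh x) has exactly two fixed points b⁻ < b⁺. Then ψ'(b⁺) = 1 (b⁺ is a saddle-node fixed point), ψ''(b⁺) < 0, and ψ'(b⁻) < 1. -/
open Real Set

noncomputable def boundaryMap (d θ h x : ℝ) : ℝ := -h + d * arctanh (θ * tanh x)

noncomputable def boundaryMapDeriv (d θ x : ℝ) : ℝ := d * θ / (1 + (1 - θ ^ 2) * sinh x ^ 2)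

lemma arctanh_neg (x : ℝ) : arctanh (-x) = -arctanh x := by
  have h : (1 + -x) / (1 - -x) = ((1 + x) / (1 - x))⁻¹ := by rw [inv_div]; ring_nf
  rw [arctanh, arctanh, h, log_inv]
  ring

lemma abs_arctanh_mul_tanh_le {θ : ℝ} (hθ : θ ∈ Ico 0 1) (x : ℝ) :
    |arctanh (θ * tanh x)| ≤ arctanh θ := by
  have hartanh : ∀ u ∈ Icc (-1 : ℝ) 1, arctanh u = artanh u := fun u hu =>
    (artanh_eq_half_log hu).symm
  have hu : |θ * tanh x| ≤ θ := by
    rw [abs_mul, abs_of_nonneg hθ.1]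
    exact mul_le_of_le_one_right hθ.1 (abs_tanh_lt_one x).le
  obtain ⟨hu₁, hu₂⟩ := abs_le.1 hu
  have hmem : θ * tanh x ∈ Ioo (-1 : ℝ) 1 := ⟨by linarith [hθ.2], by linarith [hθ.2]⟩
  rw [abs_le, ← arctanh_neg, hartanh _ (Ioo_subset_Icc_self hmem),
    hartanh θ ⟨by linarith [hθ.1], hθ.2.le⟩, hartanh (-θ) ⟨by linarith [hθ.2], by linarith [hθ.1]⟩]
  exact ⟨artanh_le_artanh (by linarith [hθ.2]) hmem.2 hu₁,
    artanh_le_artanh hmem.1 hθ.2 hu₂⟩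

lemma cosh_add_mul_sinh_pos {θ : ℝ} (hθ : |θ| ≤ 1) (x : ℝ) : 0 < cosh x + θ * sinh x := by
  have hsinh : |sinh x| < cosh x :=
    abs_lt_of_sq_lt_sq (by rw [cosh_sq]; linarith) (cosh_pos x).le
  have hmul : |θ * sinh x| ≤ |sinh x| := by
    rw [abs_mul]; exact mul_le_of_le_one_left (abs_nonneg _) hθ
  linarith [neg_abs_le (θ * sinh x)]

lemma cosh_sub_mul_sinh_pos {θ : ℝ} (hθ : |θ| ≤ 1) (x : ℝ) : 0 < cosh x - θ * sinh x := by
  simpa [neg_mul, ← sub_eq_add_neg] using cosh_add_mul_sinh_pos (θ := -θ) (by rwa [abs_neg]) x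

lemma arctanh_mul_tanh {θ : ℝ} (hθ : |θ| ≤ 1) (x : ℝ) :
    arctanh (θ * tanh x) = (log (cosh x + θ * sinh x) - log (cosh x - θ * sinh x)) / 2 := by
  have hadd := cosh_add_mul_sinh_pos hθ x
  have hsub := cosh_sub_mul_sinh_pos hθ x
  have hquot : (1 + θ * tanh x) / (1 - θ * tanh x) =
      (cosh x + θ * sinh x) / (cosh x - θ * sinh x) := by
    rw [tanh_eq_sinh_div_cosh]
    field_simp [(cosh_pos x).ne']
  rw [arctanh, hquot, log_div hadd.ne' hsub.ne']
  ring

lemma one_add_mul_sinh_sq_pos {θ : ℝ} (hθ : |θ| ≤ 1) (x : ℝ) :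
    0 < 1 + (1 - θ ^ 2) * sinh x ^ 2 := by
  have : θ ^ 2 ≤ 1 := (sq_le_one_iff_abs_le_one θ).2 hθ
  positivity

lemma hasDerivAt_boundaryMap (d h : ℝ) {θ : ℝ} (hθ : |θ| ≤ 1) (x : ℝ) :
    HasDerivAt (boundaryMap d θ h) (boundaryMapDeriv d θ x) x := by
  have hadd := cosh_add_mul_sinh_pos hθ x
  have hsub := cosh_sub_mul_sinh_pos hθ x
  have hlog : boundaryMap d θ h =
      fun x => -h + d * ((log (cosh x + θ * sinh x) - log (cosh x - θ * sinh x)) / 2) := by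
    funext y; rw [boundaryMap, arctanh_mul_tanh hθ]
  have hdadd : HasDerivAt (fun y => cosh y + θ * sinh y) (sinh x + θ * cosh x) x :=
    (hasDerivAt_cosh x).add ((hasDerivAt_sinh x).const_mul θ)
  have hdsub : HasDerivAt (fun y => cosh y - θ * sinh y) (sinh x - θ * cosh x) x :=
    (hasDerivAt_cosh x).sub ((hasDerivAt_sinh x).const_mul θ)
  rw [hlog]
  refine ((((hdadd.log hadd.ne').sub (hdsub.log hsub.ne')).div_const 2).const_mul d
    |>.const_add (-h)).congr_deriv ?_
  have hden := one_add_mul_sinh_sq_pos hθ x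
  rw [boundaryMapDeriv, div_sub_div _ _ hadd.ne' hsub.ne', eq_comm]
  field_simp
  linear_combination -2 * d * θ * (1 - θ ^ 2) * sinh x ^ 2 * cosh_sq x

lemma hasDerivAt_boundaryMapDeriv (d : ℝ) {θ : ℝ} (hθ : |θ| ≤ 1) (x : ℝ) :
    HasDerivAt (boundaryMapDeriv d θ)
      (-(2 * (d * θ) * (1 - θ ^ 2) * sinh x * cosh x) / (1 + (1 - θ ^ 2) * sinh x ^ 2) ^ 2) x := by
  have hden : HasDerivAt (fun y => 1 + (1 - θ ^ 2) * sinh y ^ 2)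
      ((1 - θ ^ 2) * (2 * sinh x ^ 1 * cosh x)) x :=
    (((hasDerivAt_sinh x).pow 2).const_mul _).const_add 1
  refine ((hasDerivAt_const x (d * θ)).div hden (one_add_mul_sinh_sq_pos hθ x).ne').congr_deriv ?_
  ring

lemma deriv_boundaryMapDeriv_neg {d θ x : ℝ} (hdθ : 0 < d * θ) (hθ : |θ| < 1) (hx : 0 < x) :
    deriv (boundaryMapDeriv d θ) x < 0 := by
  have hθsq : 0 < 1 - θ ^ 2 := sub_pos.2 ((sq_lt_one_iff_abs_lt_one θ).2 hθ)
  rw [(hasDerivAt_boundaryMapDeriv d hθ.le x).deriv]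
  refine div_neg_of_neg_of_pos (neg_neg_of_pos ?_) (by positivity)
  have := sinh_pos_iff.2 hx
  have := cosh_pos x
  positivity

lemma sinh_sq_lt_sinh_sq_iff {x y : ℝ} : sinh x ^ 2 < sinh y ^ 2 ↔ |x| < |y| := by
  rw [sq_lt_sq, abs_sinh, abs_sinh, sinh_lt_sinh]

lemma exists_pos_mul_sinh_sq_eq {c k : ℝ} (hc : 0 < c) (hk : 0 < k) :
    ∃ a > 0, c * sinh a ^ 2 = k := by
  refine ⟨arsinh √(k / c), arsinh_pos_iff.2 (by positivity), ?_⟩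
  rw [sinh_arsinh, sq_sqrt (by positivity)]
  field_simp

lemma boundaryMapDeriv_lt_one_iff {d θ a : ℝ} (hθ : |θ| < 1)
    (ha : (1 - θ ^ 2) * sinh a ^ 2 = d * θ - 1) (x : ℝ) :
    boundaryMapDeriv d θ x < 1 ↔ |a| < |x| := by
  have hθsq : 0 < 1 - θ ^ 2 := sub_pos.2 ((sq_lt_one_iff_abs_lt_one θ).2 hθ)
  rw [boundaryMapDeriv, div_lt_one (one_add_mul_sinh_sq_pos hθ.le x), ← sinh_sq_lt_sinh_sq_iff,
    show d * θ = 1 + (1 - θ ^ 2) * sinh a ^ 2 by linarith, add_lt_add_iff_left,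
    mul_lt_mul_iff_of_pos_left hθsq]

lemma one_lt_boundaryMapDeriv_iff {d θ a : ℝ} (hθ : |θ| < 1)
    (ha : (1 - θ ^ 2) * sinh a ^ 2 = d * θ - 1) (x : ℝ) :
    1 < boundaryMapDeriv d θ x ↔ |x| < |a| := by
  have hθsq : 0 < 1 - θ ^ 2 := sub_pos.2 ((sq_lt_one_iff_abs_lt_one θ).2 hθ)
  rw [boundaryMapDeriv, one_lt_div (one_add_mul_sinh_sq_pos hθ.le x), ← sinh_sq_lt_sinh_sq_iff,
    show d * θ = 1 + (1 - θ ^ 2) * sinh a ^ 2 by linarith, add_lt_add_iff_left,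
    mul_lt_mul_iff_of_pos_left hθsq]

lemma boundaryMapDeriv_eq_one {d θ a : ℝ} (hθ : |θ| < 1)
    (ha : (1 - θ ^ 2) * sinh a ^ 2 = d * θ - 1) : boundaryMapDeriv d θ a = 1 :=
  le_antisymm (not_lt.1 fun h => lt_irrefl _ ((one_lt_boundaryMapDeriv_iff hθ ha a).1 h))
    (not_lt.1 fun h => lt_irrefl _ ((boundaryMapDeriv_lt_one_iff hθ ha a).1 h))

lemma boundaryMap_neg (d θ h x : ℝ) : boundaryMap d θ h (-x) = -2 * h - boundaryMap d θ h x := by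
  simp only [boundaryMap, tanh_neg, mul_neg, arctanh_neg]
  ring

lemma abs_boundaryMap_add_le {d θ : ℝ} (hd : 0 ≤ d) (hθ : θ ∈ Ico 0 1) (h x : ℝ) :
    |boundaryMap d θ h x + h| ≤ d * arctanh θ := by
  rw [boundaryMap, neg_add_cancel_comm, abs_mul, abs_of_nonneg hd]
  exact mul_le_mul_of_nonneg_left (abs_arctanh_mul_tanh_le hθ x) hd

lemma exists_le_lt_boundaryMap {d θ : ℝ} (hd : 0 ≤ d) (hθ : θ ∈ Ico 0 1) (h p : ℝ) :
    ∃ y ≤ p, y < boundaryMap d θ h y := by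
  set y := min p (-h - d * arctanh θ) - 1
  refine ⟨y, by linarith [min_le_left p (-h - d * arctanh θ)], ?_⟩
  linarith [min_le_right p (-h - d * arctanh θ),
    (abs_le.1 (abs_boundaryMap_add_le hd hθ h y)).1]

lemma exists_ge_boundaryMap_lt {d θ : ℝ} (hd : 0 ≤ d) (hθ : θ ∈ Ico 0 1) (h q : ℝ) :
    ∃ z ≥ q, boundaryMap d θ h z < z := by
  set z := max q (-h + d * arctanh θ) + 1
  refine ⟨z, by linarith [le_max_left q (-h + d * arctanh θ)], ?_⟩
  linarith [le_max_right q (-h + d * arctanh θ),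
    (abs_le.1 (abs_boundaryMap_add_le hd hθ h z)).2]

lemma continuous_boundaryMap (d h : ℝ) {θ : ℝ} (hθ : |θ| ≤ 1) :
    Continuous (boundaryMap d θ h) :=
  continuous_iff_continuousAt.2 fun x => (hasDerivAt_boundaryMap d h hθ x).continuousAt

lemma boundaryMap_sub_self_strictAnti_strictMono_strictAnti {d θ a : ℝ} (h : ℝ) (hθ : |θ| < 1)
    (ha : (1 - θ ^ 2) * sinh a ^ 2 = d * θ - 1) (ha₀ : 0 ≤ a) :
    StrictAntiOn (fun x => boundaryMap d θ h x - x) (Iic (-a)) ∧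
      StrictMonoOn (fun x => boundaryMap d θ h x - x) (Icc (-a) a) ∧
      StrictAntiOn (fun x => boundaryMap d θ h x - x) (Ici a) := by
  have hderiv : ∀ x, deriv (fun x => boundaryMap d θ h x - x) x = boundaryMapDeriv d θ x - 1 :=
    fun x => ((hasDerivAt_boundaryMap d h hθ.le x).sub (hasDerivAt_id x)).deriv
  have hcont : Continuous fun x => boundaryMap d θ h x - x :=
    (continuous_boundaryMap d h hθ.le).sub continuous_id
  refine ⟨strictAntiOn_of_deriv_neg (convex_Iic _) hcont.continuousOn fun x hx => ?_,
    strictMonoOn_of_deriv_pos (convex_Icc _ _) hcont.continuousOn fun x hx => ?_,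
    strictAntiOn_of_deriv_neg (convex_Ici _) hcont.continuousOn fun x hx => ?_⟩
  · rw [interior_Iic, mem_Iio] at hx
    rw [hderiv, sub_neg, boundaryMapDeriv_lt_one_iff hθ ha, abs_of_nonneg ha₀]
    exact lt_abs.2 (Or.inr (by linarith))
  · rw [interior_Icc, mem_Ioo] at hx
    rw [hderiv, sub_pos, one_lt_boundaryMapDeriv_iff hθ ha, abs_of_nonneg ha₀]
    exact abs_lt.2 hx
  · rw [interior_Ici, mem_Ioi] at hx
    rw [hderiv, sub_neg, boundaryMapDeriv_lt_one_iff hθ ha, abs_of_nonneg ha₀]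
    exact lt_abs.2 (Or.inl hx)

lemma eq_and_eq_of_lt {α : Type*} [LinearOrder α] {P : α → Prop} {bm bp z w : α}
    (hP : ∀ x, P x ↔ x = bm ∨ x = bp) (hlt : bm < bp) (hz : P z) (hw : P w) (hzw : z < w) :
    z = bm ∧ w = bp := by
  rcases (hP z).1 hz with rfl | rfl <;> rcases (hP w).1 hw with rfl | rfl <;>
    first | exact ⟨rfl, rfl⟩ | order

lemma zeros_of_strictAnti_strictMono_strictAnti {g : ℝ → ℝ} {p q bm bp : ℝ} (hpq : p ≤ q)
    (hg : Continuous g) (hleft : StrictAntiOn g (Iic p)) (hmid : StrictMonoOn g (Icc p q))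
    (hright : StrictAntiOn g (Ici q)) (hsum : g p + g q < 0) (hbot : ∃ y ≤ p, 0 < g y)
    (htop : ∃ z ≥ q, g z < 0) (hzero : ∀ x, g x = 0 ↔ x = bm ∨ x = bp) (hlt : bm < bp) :
    bm < p ∧ bp = q := by
  obtain ⟨y, hyp, hy⟩ := hbot
  obtain ⟨z, hqz, hz⟩ := htop
  have hbm : g bm = 0 := (hzero bm).2 (Or.inl rfl)
  have hbp : g bp = 0 := (hzero bp).2 (Or.inr rfl)
  rcases lt_or_ge (g q) 0 with hq | hq
  · have hneg : ∀ x, p ≤ x → g x < 0 := fun x hx => by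
      rcases le_total x q with hxq | hqx
      · exact (hmid.monotoneOn ⟨hx, hxq⟩ ⟨hpq, le_rfl⟩ hxq).trans_lt hq
      · exact (hright.antitoneOn self_mem_Ici hqx hqx).trans_lt hq
    have hle : ∀ x, g x = 0 → x ∈ Iic p := fun x hx =>
      le_of_lt (not_le.1 fun h => (hneg x h).ne hx)
    exact absurd (hleft.injOn (hle bm hbm) (hle bp hbp) (hbm.trans hbp.symm)) hlt.ne
  have hp : g p < 0 := by linarith
  obtain ⟨z₁, hz₁, hgz₁⟩ := intermediate_value_Ioo' hyp hg.continuousOn ⟨hp, hy⟩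
  rcases hq.eq_or_lt with hq | hq
  · obtain ⟨hz₁bm, hqbp⟩ := eq_and_eq_of_lt hzero hlt hgz₁ hq.symm (hz₁.2.trans_le hpq)
    exact ⟨hz₁bm ▸ hz₁.2, hqbp.symm⟩
  · obtain ⟨z₂, hz₂, hgz₂⟩ := intermediate_value_Ioo hpq hg.continuousOn ⟨hp, hq⟩
    obtain ⟨z₃, hz₃, hgz₃⟩ := intermediate_value_Ioo' hqz hg.continuousOn ⟨hz, hq⟩
    have h₁₂ := eq_and_eq_of_lt hzero hlt hgz₁ hgz₂ (hz₁.2.trans hz₂.1)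
    have h₂₃ := eq_and_eq_of_lt hzero hlt hgz₂ hgz₃ (hz₂.2.trans hz₃.1)
    exact absurd (h₂₃.1.symm.trans h₁₂.2) hlt.ne

theorem saddle_node_at_critical_field_general
    (d : ℕ) (θ hc : ℝ) (hθ : θ ∈ Set.Ioo (0 : ℝ) 1)
    (hdθ : 1 < (d : ℝ) * θ) (hhc : 0 < hc)
    (ψ : ℝ → ℝ) (hψ : ψ = fun x => -hc + d * arctanh (θ * Real.tanh x))
    (bm bp : ℝ) (hlt : bm < bp)
    (hfix : ∀ x, ψ x = x ↔ x = bm ∨ x = bp) :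
    deriv ψ bp = 1 ∧ deriv (deriv ψ) bp < 0 ∧ deriv ψ bm < 1 := by
  have hθabs : |θ| < 1 := abs_lt.2 ⟨by linarith [hθ.1], hθ.2⟩
  change ψ = boundaryMap d θ hc at hψ
  subst hψ
  have hderiv : deriv (boundaryMap d θ hc) = boundaryMapDeriv d θ :=
    funext fun x => (hasDerivAt_boundaryMap d hc hθabs.le x).deriv
  obtain ⟨a, ha₀, ha⟩ := exists_pos_mul_sinh_sq_eq
    (sub_pos.2 ((sq_lt_one_iff_abs_lt_one θ).2 hθabs)) (sub_pos.2 hdθ)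
  obtain ⟨hleft, hmid, hright⟩ :=
    boundaryMap_sub_self_strictAnti_strictMono_strictAnti hc hθabs ha ha₀.le
  obtain ⟨y, hy, hgy⟩ := exists_le_lt_boundaryMap d.cast_nonneg (Ioo_subset_Ico_self hθ) hc (-a)
  obtain ⟨z, hz, hgz⟩ := exists_ge_boundaryMap_lt d.cast_nonneg (Ioo_subset_Ico_self hθ) hc a
  obtain ⟨hbm, rfl⟩ := zeros_of_strictAnti_strictMono_strictAnti
    (g := fun x => boundaryMap d θ hc x - x) (by linarith)
    ((continuous_boundaryMap d hc hθabs.le).sub continuous_id) hleft hmid hright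
    (by linarith [boundaryMap_neg d θ hc a]) ⟨y, hy, sub_pos.2 hgy⟩ ⟨z, hz, sub_neg.2 hgz⟩
    (fun x => sub_eq_zero.trans (hfix x)) hlt
  rw [hderiv]
  refine ⟨boundaryMapDeriv_eq_one hθabs ha, deriv_boundaryMapDeriv_neg (by linarith) hθabs ha₀,
    (boundaryMapDeriv_lt_one_iff hθabs ha bm).2 ?_⟩
  rw [abs_of_pos ha₀]
  exact lt_abs.2 (Or.inr (by linarith))

/-- at the negative critical field (exactly two fixed points `b⁻ < b⁺`),
`b⁺` is a saddle-node fixed point: `ψ'(b⁺) = 1`, `ψ''(b⁺) < 0`, and `ψ'(b⁻) < 1`. -/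
theorem saddle_node_at_critical_field
    (d : ℕ) (hd : 2 ≤ d) (θ hc : ℝ) (hθ : θ ∈ Set.Ioo (0 : ℝ) 1)
    (hdθ : 1 < (d : ℝ) * θ) (hhc : 0 < hc)
    (ψ : ℝ → ℝ) (hψ : ψ = fun x => -hc + d * arctanh (θ * Real.tanh x))
    (bm bp : ℝ) (hlt : bm < bp)
    (hfix : ∀ x, ψ x = x ↔ x = bm ∨ x = bp) :
    deriv ψ bp = 1 ∧ deriv (deriv ψ) bp < 0 ∧ deriv ψ bm < 1 :=
  saddle_node_at_critical_field_general d θ hc hθ hdθ hhc ψ hψ bm bp hlt hfix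
end

section
/- Let d ≥ 2 be an integer, θ ∈ (0,1), h ∈ ℝ, ψ(x) = h + d·arctanh(θ·tanh x), and let b⁻ < 0 be a fixed point of ψ with λ := ψ'(b⁻) < 1. Let (ε_n)_{n≥1} be a nonnegative sequence and define ψ̃_{n,n}(x) = ψ(x) - ε_n and ψ̃_{k,n}(x) = ψ(ψ̃_{k+1,n}(x)) - ε_k for k < n. Then for all 1 ≤ k ≤ n: b⁻ - Σ_{i=k}^n λ^{i-k}·ε_i ≤ ψ̃_{k,n}(b⁻) ≤ b⁻. -/
/-!
`ψ` is increasing, and `ψ' x = dθ (1 - tanh² x) / (1 - θ² tanh² x)` decreases in `tanh² x`,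
so `ψ' ≤ λ` on `(-∞, b⁻]`. By the mean value theorem, `b⁻ - λ (b⁻ - y) ≤ ψ y ≤ b⁻` for
`y ≤ b⁻`. A descending induction on `k` then propagates both bounds along
`ψ̃_{k,n}(b⁻) = ψ (ψ̃_{k+1,n}(b⁻)) - ε_k`, since the weighted sums satisfy
`S_k = ε_k + λ S_{k+1}`.
-/

open Finset Real

section PerturbedOrbit

variable {f : ℝ → ℝ} {b lam : ℝ} {ε : ℕ → ℝ} {Ψ : ℕ → ℕ → ℝ → ℝ}

theorem sum_Icc_pow_sub_mul_eq_add_mul_sum {k n : ℕ} (hkn : k ≤ n) :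
    ∑ i ∈ Icc k n, lam ^ (i - k) * ε i =
      ε k + lam * ∑ i ∈ Icc (k + 1) n, lam ^ (i - (k + 1)) * ε i := by
  rw [Icc_eq_cons_Ioc hkn, sum_cons, ← Icc_add_one_left_eq_Ioc, Nat.sub_self, pow_zero, one_mul,
    mul_sum]
  congr 1
  refine sum_congr rfl fun i hi => ?_
  rw [show i - k = i - (k + 1) + 1 by grind, pow_succ]
  ring

theorem perturbed_orbit_bounds (hmono : Monotone f) (hfix : f b = b) (hlam : 0 ≤ lam)
    (hslope : ∀ y ≤ b, f b - f y ≤ lam * (b - y)) (hε : ∀ n, 0 ≤ ε n)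
    (hdiag : ∀ n x, Ψ n n x = f x - ε n)
    (hrec : ∀ k n, k < n → ∀ x, Ψ k n x = f (Ψ (k + 1) n x) - ε k)
    {k n : ℕ} (hkn : k ≤ n) :
    b - ∑ i ∈ Icc k n, lam ^ (i - k) * ε i ≤ Ψ k n b ∧ Ψ k n b ≤ b := by
  induction hkn using Nat.decreasingInduction with
  | self =>
    simp only [Icc_self, sum_singleton, Nat.sub_self, pow_zero, one_mul, hdiag, hfix]
    exact ⟨le_rfl, by linarith [hε n]⟩
  | of_succ k hk ih =>
    obtain ⟨hlower, hupper⟩ := ih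
    rw [hrec k n hk, sum_Icc_pow_sub_mul_eq_add_mul_sum hk.le]
    set S := ∑ i ∈ Icc (k + 1) n, lam ^ (i - (k + 1)) * ε i
    have hf_upper : f (Ψ (k + 1) n b) ≤ b := (hmono hupper).trans hfix.le
    have hf_lower : b - lam * S ≤ f (Ψ (k + 1) n b) := by
      have := mul_le_mul_of_nonneg_left (show b - Ψ (k + 1) n b ≤ S by linarith) hlam
      linarith [hslope _ hupper]
    exact ⟨by linarith, by linarith [hε k]⟩

end PerturbedOrbit

theorem hasDerivAt_arctanh {x : ℝ} (hx : |x| < 1) : HasDerivAt arctanh (1 - x ^ 2)⁻¹ x := by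
  obtain ⟨hx₁, hx₂⟩ := abs_lt.1 hx
  have hquot : HasDerivAt (fun y => (1 + y) / (1 - y)) (2 / (1 - x) ^ 2) x := by
    refine (((hasDerivAt_id x).const_add 1).div ((hasDerivAt_id x).const_sub 1)
      (by simp; linarith)).congr_deriv ?_
    simp only [id]
    ring
  refine ((hquot.log (div_pos (by linarith) (by linarith)).ne').const_mul (1 / 2)).congr_deriv ?_
  have h₁ : 1 + x ≠ 0 := by linarith
  have h₂ : 1 - x ≠ 0 := by linarith
  rw [show 1 - x ^ 2 = (1 + x) * (1 - x) by ring]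
  field_simp

theorem Real.hasDerivAt_tanh_s16 (x : ℝ) : HasDerivAt tanh (1 - tanh x ^ 2) x := by
  rw [show tanh = fun y => sinh y / cosh y from funext tanh_eq_sinh_div_cosh]
  refine ((hasDerivAt_sinh x).div (hasDerivAt_cosh x) (cosh_pos x).ne').congr_deriv ?_
  field_simp

theorem Real.tanh_monotone : Monotone tanh :=
  monotone_of_hasDerivAt_nonneg hasDerivAt_tanh_s16 fun x => sub_nonneg.2 (tanh_sq_lt_one x).le

theorem one_sub_div_one_sub_mul_le {c r s : ℝ} (hc : c ≤ 1) (hr : c * r < 1) (hs : c * s < 1)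
    (hrs : r ≤ s) : (1 - s) / (1 - c * s) ≤ (1 - r) / (1 - c * r) := by
  rw [div_le_div_iff₀ (by linarith) (by linarith)]
  nlinarith

noncomputable def boundaryField (d θ h x : ℝ) : ℝ := h + d * arctanh (θ * tanh x)

noncomputable def boundaryFieldDeriv (d θ x : ℝ) : ℝ :=
  d * θ * ((1 - tanh x ^ 2) / (1 - θ ^ 2 * tanh x ^ 2))

section BoundaryField

variable {d θ : ℝ}

theorem hasDerivAt_boundaryField (h : ℝ) (hθ : |θ| ≤ 1) (x : ℝ) :
    HasDerivAt (boundaryField d θ h) (boundaryFieldDeriv d θ x) x := by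
  have hlt : |θ * tanh x| < 1 := by
    rw [abs_mul]
    exact lt_of_le_of_lt (mul_le_of_le_one_left (abs_nonneg _) hθ) (abs_tanh_lt_one x)
  refine ((((hasDerivAt_arctanh hlt).comp x ((hasDerivAt_tanh_s16 x).const_mul θ)).const_mul d
    ).const_add h).congr_deriv ?_
  have : θ ^ 2 * tanh x ^ 2 < 1 := by rw [← mul_pow, ← sq_abs]; nlinarith [abs_nonneg (θ * tanh x)]
  rw [boundaryFieldDeriv, mul_pow]
  field_simp

theorem boundaryFieldDeriv_nonneg (hd : 0 ≤ d) (hθ₀ : 0 ≤ θ) (hθ₁ : θ ≤ 1) (x : ℝ) :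
    0 ≤ boundaryFieldDeriv d θ x := by
  have : θ ^ 2 * tanh x ^ 2 < 1 := by
    nlinarith [pow_le_one₀ hθ₀ hθ₁ (n := 2), sq_nonneg (tanh x), tanh_sq_lt_one x]
  exact mul_nonneg (mul_nonneg hd hθ₀)
    (div_nonneg (by linarith [tanh_sq_lt_one x]) (by linarith))

theorem boundaryFieldDeriv_le_of_le_of_nonpos (hd : 0 ≤ d) (hθ₀ : 0 ≤ θ) (hθ₁ : θ ≤ 1)
    {x b : ℝ} (hxb : x ≤ b) (hb : b ≤ 0) : boundaryFieldDeriv d θ x ≤ boundaryFieldDeriv d θ b := by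
  have htx : tanh x ≤ tanh b := tanh_monotone hxb
  have htb : tanh b ≤ 0 := by simpa using tanh_monotone hb
  have hθsq : θ ^ 2 ≤ 1 := pow_le_one₀ hθ₀ hθ₁
  have hx := tanh_sq_lt_one x
  have hb' := tanh_sq_lt_one b
  exact mul_le_mul_of_nonneg_left
    (one_sub_div_one_sub_mul_le hθsq (by nlinarith) (by nlinarith) (by nlinarith))
    (mul_nonneg hd hθ₀)

theorem boundaryField_sub_le (h : ℝ) (hd : 0 ≤ d) (hθ₀ : 0 ≤ θ) (hθ₁ : θ ≤ 1) {b y : ℝ}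
    (hb : b ≤ 0) (hyb : y ≤ b) :
    boundaryField d θ h b - boundaryField d θ h y ≤ boundaryFieldDeriv d θ b * (b - y) := by
  have hderiv := hasDerivAt_boundaryField (d := d) h (abs_le.2 ⟨by linarith, hθ₁⟩)
  have hdiff : Differentiable ℝ (boundaryField d θ h) := fun x => (hderiv x).differentiableAt
  refine (convex_Iic b).image_sub_le_mul_sub_of_deriv_le hdiff.continuous.continuousOn
    hdiff.differentiableOn (fun x hx => ?_) y hyb b (le_refl b) hyb
  rw [(hderiv x).deriv]
  exact boundaryFieldDeriv_le_of_le_of_nonpos hd hθ₀ hθ₁ (interior_subset hx : x ∈ Set.Iic b) hb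

end BoundaryField

theorem perturbed_minus_orbit_geometric_bound_general
    (d : ℕ) (θ h : ℝ) (hθ : θ ∈ Set.Ioo (0 : ℝ) 1)
    (ψ : ℝ → ℝ) (hψ : ψ = fun x => h + d * arctanh (θ * Real.tanh x))
    (bm : ℝ) (hbm : bm < 0) (hfixm : ψ bm = bm)
    (lam : ℝ) (hlam : lam = deriv ψ bm)
    (ε : ℕ → ℝ) (hpos : ∀ n, 0 ≤ ε n)
    (Ψ : ℕ → ℕ → ℝ → ℝ)
    (hdiag : ∀ n x, Ψ n n x = ψ x - ε n)
    (hrec : ∀ k n, k < n → ∀ x, Ψ k n x = ψ (Ψ (k + 1) n x) - ε k) :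
    ∀ k n : ℕ, 1 ≤ k → k ≤ n →
      bm - ∑ i ∈ Finset.Icc k n, lam ^ (i - k) * ε i ≤ Ψ k n bm ∧
      Ψ k n bm ≤ bm := by
  have hθ₀ : 0 ≤ θ := hθ.1.le
  have hθ₁ : θ ≤ 1 := hθ.2.le
  have hd : (0 : ℝ) ≤ d := d.cast_nonneg
  change ψ = boundaryField d θ h at hψ
  subst hψ
  have hderiv := hasDerivAt_boundaryField (d := d) h (abs_le.2 ⟨by linarith, hθ₁⟩)
  obtain rfl : lam = boundaryFieldDeriv d θ bm := hlam ▸ (hderiv bm).deriv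
  intro k n _ hkn
  exact perturbed_orbit_bounds
    (monotone_of_hasDerivAt_nonneg hderiv (boundaryFieldDeriv_nonneg hd hθ₀ hθ₁))
    hfixm (boundaryFieldDeriv_nonneg hd hθ₀ hθ₁ bm)
    (fun y => boundaryField_sub_le h hd hθ₀ hθ₁ hbm.le) hpos hdiag hrec hkn

/-- near the stable fixed point `b⁻ < 0` with `λ = ψ'(b⁻) < 1`, the
perturbed minus orbit satisfies
`b⁻ - Σ_{i=k}^n λ^{i-k} ε_i ≤ ψ̃_{k,n}(b⁻) ≤ b⁻` for all `1 ≤ k ≤ n`. -/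
theorem perturbed_minus_orbit_geometric_bound
    (d : ℕ) (hd : 2 ≤ d) (θ h : ℝ) (hθ : θ ∈ Set.Ioo (0 : ℝ) 1)
    (ψ : ℝ → ℝ) (hψ : ψ = fun x => h + d * arctanh (θ * Real.tanh x))
    (bm : ℝ) (hbm : bm < 0) (hfixm : ψ bm = bm)
    (lam : ℝ) (hlam : lam = deriv ψ bm) (hlam1 : lam < 1)
    (ε : ℕ → ℝ) (hpos : ∀ n, 0 ≤ ε n)
    (Ψ : ℕ → ℕ → ℝ → ℝ)
    (hdiag : ∀ n x, Ψ n n x = ψ x - ε n)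
    (hrec : ∀ k n, k < n → ∀ x, Ψ k n x = ψ (Ψ (k + 1) n x) - ε k) :
    ∀ k n : ℕ, 1 ≤ k → k ≤ n →
      bm - ∑ i ∈ Finset.Icc k n, lam ^ (i - k) * ε i ≤ Ψ k n bm ∧
      Ψ k n bm ≤ bm :=
  perturbed_minus_orbit_geometric_bound_general d θ h hθ ψ hψ bm hbm hfixm lam hlam ε hpos Ψ hdiag
    hrec
end
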